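/- arXiv:0906.3652 — 2 statements merged into one kernel-verified Lean document; each statement's English description precedes it below -/
import Mathlib

section
/- The mean number of dimers is asymptotically (2N-1)/9: lim_{N→∞} [ Σ_{t=1}^{N} Σ_{s=1}^{⌊t/2⌋} s · P̃_N(s,t) - (2N-1)/9 ] = 0. -/
/-!
For `N ≥ 2` the mean is exactly `(2N-1)/9`. In the variables `m = t - s` and `s`, the summand
`s · C(N-m, s) · C(m-1, s-1)` summed over `s` collapses, by Vandermonde's identity, to
`(N-m) · C(N-2, m-1)`; the remaining sum over `m` is `Σ (n+1-i) C(n,i) x^i` at `x = 1/2`, which is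
read off from `(1+x)^n` and `x · d/dx (1+x)^n`.
-/

/-- The hard-dimer probability weights `P̃_N(s,t)`:
`P̃_N(0,0) = (2/3)^{N-1}`,
`P̃_N(s,t) = (2/3)^{N-1} · C(N-t+s, s) · C(t-s-1, s-1) · 2^{-(t-s)}`
for `1 ≤ s ≤ ⌊t/2⌋` and `1 ≤ t ≤ N`, and `P̃_N(s,t) = 0` otherwise. -/
noncomputable def Ptilde (N s t : ℕ) : ℝ :=
  if s = 0 ∧ t = 0 then (2 / 3 : ℝ) ^ (N - 1)
  else if 1 ≤ s ∧ s ≤ t / 2 ∧ 1 ≤ t ∧ t ≤ N then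
    (2 / 3 : ℝ) ^ (N - 1) * ((N - t + s).choose s : ℝ)
      * ((t - s - 1).choose (s - 1) : ℝ) * (1 / 2 : ℝ) ^ (t - s)
  else 0

open Finset

namespace Nat

theorem sum_range_choose_mul_choose (a b : ℕ) :
    ∑ j ∈ range (a + 1), a.choose j * b.choose j = (a + b).choose a := by
  rw [add_choose_eq, Finset.Nat.sum_antidiagonal_eq_sum_range_succ_mk, ← sum_range_reflect]
  refine sum_congr rfl fun j hj => ?_
  rw [add_tsub_cancel_right, choose_symm (by simpa [Nat.lt_succ_iff] using hj)]

theorem sum_range_mul_choose_mul_choose_sub_one (n b : ℕ) {K : ℕ} (hK : n < K) :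
    ∑ s ∈ range K, s * n.choose s * b.choose (s - 1) = n * (n - 1 + b).choose b := by
  rw [← sum_subset (range_subset_range.2 hK) fun s _ hs => by
    rw [choose_eq_zero_of_lt (by simpa using hs)]; simp]
  cases n with
  | zero => simp
  | succ n =>
    rw [sum_range_succ', zero_mul, zero_mul, add_zero, add_tsub_cancel_right, ← choose_symm_add,
      ← sum_range_choose_mul_choose, mul_sum]
    refine sum_congr rfl fun j _ => ?_
    rw [add_tsub_cancel_right, mul_comm (j + 1), ← add_one_mul_choose_eq]
    ring

end Nat

theorem sum_range_mul_choose_mul_pow {R : Type*} [CommSemiring R] (n : ℕ) (x : R) :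
    (∑ i ∈ range (n + 1), (i : R) * n.choose i * x ^ i) * (1 + x) = n * x * (1 + x) ^ n := by
  cases n with
  | zero => simp
  | succ n =>
    have key : ∑ i ∈ range (n + 2), (i : R) * (n + 1).choose i * x ^ i
        = (n + 1) * x * (1 + x) ^ n := by
      rw [sum_range_succ', Nat.cast_zero, zero_mul, zero_mul, add_zero, add_comm 1 x, add_pow,
        mul_sum]
      refine sum_congr rfl fun j _ => ?_
      calc ((j + 1 : ℕ) : R) * (n + 1).choose (j + 1) * x ^ (j + 1)
          = (((n + 1).choose (j + 1) * (j + 1) : ℕ) : R) * x ^ (j + 1) := by push_cast; ring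
        _ = (((n + 1) * n.choose j : ℕ) : R) * x ^ (j + 1) := by rw [Nat.add_one_mul_choose_eq]
        _ = _ := by push_cast; ring
    rw [key]
    push_cast
    ring

theorem sum_Icc_sub_mul_choose_mul_half_pow (n : ℕ) :
    ∑ m ∈ Icc 1 (n + 2), ((n + 2 - m : ℕ) : ℝ) * n.choose (m - 1) * (1 / 2 : ℝ) ^ m
      = (2 * n + 3) / 6 * (3 / 2 : ℝ) ^ n := by
  have h0 : ∑ i ∈ range (n + 1), (n.choose i : ℝ) * (1 / 2 : ℝ) ^ i = (3 / 2 : ℝ) ^ n := by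
    rw [show (3 / 2 : ℝ) = 1 / 2 + 1 by norm_num, add_pow]
    exact sum_congr rfl fun i _ => by ring
  have h1 := sum_range_mul_choose_mul_pow n (1 / 2 : ℝ)
  rw [← Ico_add_one_right_eq_Icc, sum_Ico_eq_sum_range, add_tsub_cancel_right, sum_range_succ,
    add_tsub_cancel_left, Nat.choose_succ_self, Nat.cast_zero, mul_zero, zero_mul, add_zero]
  have hterm : ∀ i ∈ range (n + 1), ((n + 2 - (1 + i) : ℕ) : ℝ) * n.choose (1 + i - 1)
      * (1 / 2 : ℝ) ^ (1 + i)
      = 1 / 2 * ((n + 1) * (n.choose i * (1 / 2 : ℝ) ^ i) - i * n.choose i * (1 / 2 : ℝ) ^ i) := by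
    intro i hi
    rw [mem_range] at hi
    rw [Nat.cast_sub (by omega), add_tsub_cancel_left]
    push_cast
    ring
  rw [sum_congr rfl hterm, ← mul_sum, sum_sub_distrib, ← mul_sum, h0]
  linear_combination (-1 / 3 : ℝ) * h1

theorem sum_Icc_sum_Icc_div_two_eq {M : Type*} [AddCommMonoid M] (N : ℕ) (g : ℕ → ℕ → M)
    (hg : ∀ m ∈ Icc 1 N, ∀ s, g m s ≠ 0 → 1 ≤ s ∧ s ≤ m ∧ m + s ≤ N) :
    ∑ t ∈ Icc 1 N, ∑ s ∈ Icc 1 (t / 2), g (t - s) s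
      = ∑ m ∈ Icc 1 N, ∑ s ∈ range (N + 1), g m s := by
  set B := Icc 1 N ×ˢ range (N + 1)
  calc ∑ t ∈ Icc 1 N, ∑ s ∈ Icc 1 (t / 2), g (t - s) s
      = ∑ p ∈ B with 1 ≤ p.2 ∧ 2 * p.2 ≤ p.1, g (p.1 - p.2) p.2 :=
        (sum_finset_product' _ _ _ fun p => by
          simp only [B, mem_filter, mem_product, mem_Icc, mem_range]; omega).symm
    _ = ∑ p ∈ B with 1 ≤ p.2 ∧ p.2 ≤ p.1 ∧ p.1 + p.2 ≤ N, g p.1 p.2 := by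
        refine sum_nbij' (fun p => (p.1 - p.2, p.2)) (fun p => (p.1 + p.2, p.2)) ?_ ?_ ?_ ?_ ?_ <;>
          simp only [B, mem_filter, mem_product, mem_Icc, mem_range, Prod.forall, Prod.mk.injEq,
            and_true, implies_true] <;>
          intros <;> omega
    _ = ∑ p ∈ B, g p.1 p.2 :=
        sum_filter_of_ne fun p hp => hg p.1 (mem_product.1 hp).1 p.2
    _ = ∑ m ∈ Icc 1 N, ∑ s ∈ range (N + 1), g m s := sum_product' _ _ _

/-- `s · P̃_N(s, t)` without the factor `(2/3)^(N-1)`, in the variables `m = t - s` and `s`. -/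
noncomputable def dimerWeight (N m s : ℕ) : ℝ :=
  s * (N - m).choose s * (m - 1).choose (s - 1) * (1 / 2 : ℝ) ^ m

theorem natCast_mul_Ptilde {N s t : ℕ} (hs : s ∈ Icc 1 (t / 2)) (ht : t ∈ Icc 1 N) :
    s * Ptilde N s t = (2 / 3 : ℝ) ^ (N - 1) * dimerWeight N (t - s) s := by
  rw [mem_Icc] at hs ht
  rw [Ptilde, dimerWeight, if_neg (by omega), if_pos (by omega),
    show N - t + s = N - (t - s) by omega]
  ring

theorem le_of_dimerWeight_ne_zero {N m s : ℕ} (hm : 1 ≤ m) (h : dimerWeight N m s ≠ 0) :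
    1 ≤ s ∧ s ≤ m ∧ m + s ≤ N := by
  have hs : s ≠ 0 := by rintro rfl; simp [dimerWeight] at h
  have h₁ : s ≤ N - m := by
    by_contra! h'; simp [dimerWeight, Nat.choose_eq_zero_of_lt h'] at h
  have h₂ : s - 1 ≤ m - 1 := by
    by_contra! h'; simp [dimerWeight, Nat.choose_eq_zero_of_lt h'] at h
  omega

theorem sum_range_dimerWeight {N m : ℕ} (hm : m ∈ Icc 1 N) :
    ∑ s ∈ range (N + 1), dimerWeight N m s
      = ((N - m : ℕ) : ℝ) * (N - 2).choose (m - 1) * (1 / 2 : ℝ) ^ m := by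
  rw [mem_Icc] at hm
  have h := Nat.sum_range_mul_choose_mul_choose_sub_one (N - m) (m - 1) (K := N + 1) (by omega)
  have hchoose : (N - m) * (N - m - 1 + (m - 1)).choose (m - 1)
      = (N - m) * (N - 2).choose (m - 1) := by
    obtain rfl | hmN := hm.2.eq_or_lt
    · simp
    · rw [show N - m - 1 + (m - 1) = N - 2 by omega]
  rw [hchoose] at h
  simp only [dimerWeight, ← sum_mul]
  exact_mod_cast congrArg (fun k : ℕ => (k : ℝ) * (1 / 2 : ℝ) ^ m) h

theorem sum_Icc_sum_Icc_mul_Ptilde {N : ℕ} (hN : 2 ≤ N) :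
    ∑ t ∈ Icc 1 N, ∑ s ∈ Icc 1 (t / 2), (s : ℝ) * Ptilde N s t = (2 * (N : ℝ) - 1) / 9 := by
  obtain ⟨n, rfl⟩ : ∃ n, N = n + 2 := ⟨N - 2, by omega⟩
  calc ∑ t ∈ Icc 1 (n + 2), ∑ s ∈ Icc 1 (t / 2), (s : ℝ) * Ptilde (n + 2) s t
      = (2 / 3 : ℝ) ^ (n + 1)
          * ∑ t ∈ Icc 1 (n + 2), ∑ s ∈ Icc 1 (t / 2), dimerWeight (n + 2) (t - s) s := by
        simp_rw [mul_sum]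
        exact sum_congr rfl fun t ht => sum_congr rfl fun s hs => natCast_mul_Ptilde hs ht
    _ = (2 / 3 : ℝ) ^ (n + 1) * ∑ m ∈ Icc 1 (n + 2), ((n + 2 - m : ℕ) : ℝ) * n.choose (m - 1)
          * (1 / 2 : ℝ) ^ m := by
        rw [sum_Icc_sum_Icc_div_two_eq _ _ fun m hm _ => le_of_dimerWeight_ne_zero (mem_Icc.1 hm).1,
          sum_congr rfl fun m hm => sum_range_dimerWeight hm]
        rfl
    _ = (2 * ((n + 2 : ℕ) : ℝ) - 1) / 9 := by
        have hpow : (2 / 3 : ℝ) ^ n * (3 / 2 : ℝ) ^ n = 1 := by rw [← mul_pow]; norm_num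
        rw [sum_Icc_sub_mul_choose_mul_half_pow]
        push_cast
        linear_combination (2 * n + 3) / 9 * hpow

/-- the mean number of dimers is asymptotically `(2N-1)/9`. -/
theorem dimer_mean_asymptotics :
    Filter.Tendsto
      (fun N : ℕ =>
        (∑ t ∈ Finset.Icc 1 N, ∑ s ∈ Finset.Icc 1 (t / 2), (s : ℝ) * Ptilde N s t)
          - (2 * (N : ℝ) - 1) / 9)
      Filter.atTop (nhds 0) := by
  refine tendsto_const_nhds.congr' ?_
  filter_upwards [Filter.eventually_ge_atTop 2] with N hN
  rw [sum_Icc_sum_Icc_mul_Ptilde hN, sub_self]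
end

section
/- The second factorial moment of the number of dimers satisfies the recursive asymptotic relation: lim_{N→∞} [ F_N - ( N(N-1)/9 - 2(N-1)·( M_N - (4/3)·M_{N-1} + (4/9)·M_{N-2} ) + G_N - (4/3)·G_{N-1} + (4/9)·G_{N-2} ) ] = 0, where F_N := Σ_{t=1}^{N} Σ_{s=1}^{⌊t/2⌋} s(s-1)·P̃_N(s,t), M_N := Σ_{t=1}^{N} Σ_{s=1}^{⌊t/2⌋} (t-s)·P̃_N(s,t), and G_N := Σ_{t=1}^{N} Σ_{s=1}^{⌊t/2⌋} (t-s)(t-s-1)·P̃_N(s,t). -/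
/-- `F_N`: the second factorial moment of the number of dimers. -/
noncomputable def dimerSecondFactorial (N : ℕ) : ℝ :=
  ∑ t ∈ Finset.Icc 1 N, ∑ s ∈ Finset.Icc 1 (t / 2), (s : ℝ) * ((s : ℝ) - 1) * Ptilde N s t

/-- `M_N`: the mean total length of dimers. -/
noncomputable def lengthMean (N : ℕ) : ℝ :=
  ∑ t ∈ Finset.Icc 1 N, ∑ s ∈ Finset.Icc 1 (t / 2), ((t : ℝ) - (s : ℝ)) * Ptilde N s t

/-- `G_N`: the second factorial moment of the total length of dimers. -/
noncomputable def lengthSecondFactorial (N : ℕ) : ℝ :=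
  ∑ t ∈ Finset.Icc 1 N, ∑ s ∈ Finset.Icc 1 (t / 2),
    ((t : ℝ) - (s : ℝ)) * ((t : ℝ) - (s : ℝ) - 1) * Ptilde N s t

/-!
Put `m = t - s`, the total length of the dimers. Then
`P̃_N(s, s+m) = C(N-m, s) C(m-1, m-s) (1/3)^m (2/3)^(N-1-m)`, and the sums over `s` of
`s(s-1)⋯(s-r+1)` times these weights are Vandermonde convolutions. With `r = 0` this shows that
the total length is Binomial(N-1, 1/3), whence `M_N = (N-1)/3` and `G_N = (N-1)(N-2)/9`; with
`r = 2`, followed by binomial factorial moments, it gives `F_N = 4(N-1)(N-3)/81`. For `N ≥ 3`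
these closed forms make the bracket in the theorem vanish identically.
-/

open Finset

namespace Nat

theorem descFactorial_mul_choose_add (n r i : ℕ) :
    (r + i).descFactorial r * n.choose (r + i) = n.descFactorial r * (n - r).choose i := by
  have h := choose_mul (n := n) (Nat.le_add_right r i)
  rw [Nat.add_sub_cancel_left] at h
  rw [descFactorial_eq_factorial_mul_choose, descFactorial_eq_factorial_mul_choose]
  calc r ! * (r + i).choose r * n.choose (r + i) = r ! * (n.choose (r + i) * (r + i).choose r) := by
        ring
    _ = r ! * n.choose r * (n - r).choose i := by rw [h, mul_assoc]

theorem sum_range_descFactorial_mul_choose_mul {R : Type*} [CommSemiring R] {r L : ℕ}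
    (hr : r ≤ L) (n : ℕ) (f : ℕ → R) :
    ∑ k ∈ range (L + 1), (k.descFactorial r * n.choose k : R) * f k
      = n.descFactorial r * ∑ i ∈ range (L - r + 1), ((n - r).choose i : R) * f (r + i) := by
  rw [show L + 1 = r + (L - r + 1) by omega, sum_range_add,
    Finset.sum_eq_zero fun k hk => by simp [descFactorial_eq_zero_iff_lt.2 (mem_range.1 hk)],
    zero_add, mul_sum]
  refine Finset.sum_congr rfl fun i _ => ?_
  rw [← mul_assoc, ← cast_mul, descFactorial_mul_choose_add, cast_mul, mul_assoc]

theorem sum_range_descFactorial_mul_choose_mul_pow {R : Type*} [CommSemiring R] (n r : ℕ)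
    (x y : R) :
    ∑ k ∈ range (n + 1), (k.descFactorial r * n.choose k : R) * (x ^ k * y ^ (n - k))
      = n.descFactorial r * x ^ r * (x + y) ^ (n - r) := by
  rcases lt_or_ge n r with hnr | hrn
  · rw [descFactorial_eq_zero_iff_lt.2 hnr, Nat.cast_zero, zero_mul, zero_mul]
    refine Finset.sum_eq_zero fun k hk => ?_
    simp [descFactorial_eq_zero_iff_lt.2 ((mem_range_succ_iff.1 hk).trans_lt hnr)]
  rw [sum_range_descFactorial_mul_choose_mul hrn, (Commute.all x y).add_pow, mul_assoc]
  congr 1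
  rw [mul_sum]
  refine Finset.sum_congr rfl fun i _ => ?_
  rw [show n - (r + i) = n - r - i by omega, pow_add]
  ring

theorem sum_range_descFactorial_mul_choose_mul_choose {r m : ℕ} (hr : r ≤ m) (a b : ℕ) :
    ∑ s ∈ range (m + 1), s.descFactorial r * a.choose s * b.choose (m - s)
      = a.descFactorial r * (a - r + b).choose (m - r) := by
  have h := sum_range_descFactorial_mul_choose_mul hr a fun s => b.choose (m - s)
  simp only [cast_id] at h
  rw [h, add_choose_eq, Finset.Nat.sum_antidiagonal_eq_sum_range_succ_mk]
  congr 1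
  refine Finset.sum_congr rfl fun i _ => ?_
  rw [show m - (r + i) = m - r - i by omega]

end Nat

theorem Ptilde_zero_left {N t : ℕ} (ht : t ≠ 0) : Ptilde N 0 t = 0 := by
  simp [Ptilde, ht]

theorem Ptilde_eq_zero_of_lt {N s t : ℕ} (h : N < t) : Ptilde N s t = 0 := by
  rw [Ptilde, if_neg (by omega), if_neg (by omega)]

/-- Writing the second coefficient as `C(m-1, m-s)` instead of `C(m-1, s-1)` lets truncated
subtraction make the formula cover `s = 0` as well, including `P̃_N(0,0)`. -/
theorem Ptilde_add {N s m : ℕ} (hsm : s ≤ m) :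
    Ptilde N s (s + m)
      = (N - m).choose s * (m - 1).choose (m - s)
          * ((1 / 3 : ℝ) ^ m * (2 / 3) ^ (N - 1 - m)) := by
  rcases Nat.eq_zero_or_pos s with rfl | hs
  · rcases Nat.eq_zero_or_pos m with rfl | hm
    · simp [Ptilde]
    · rw [zero_add, Ptilde_zero_left hm.ne', Nat.choose_eq_zero_of_lt (by omega : m - 1 < m - 0)]
      simp
  rcases lt_or_ge N (s + m) with hN | hN
  · rw [Ptilde_eq_zero_of_lt hN, Nat.choose_eq_zero_of_lt (by omega : N - m < s)]
    simp
  have hw : (2 / 3 : ℝ) ^ (N - 1) * (1 / 2) ^ m = (1 / 3) ^ m * (2 / 3) ^ (N - 1 - m) := by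
    rw [show N - 1 = N - 1 - m + m by omega, pow_add,
      show (1 / 3 : ℝ) = 2 / 3 * (1 / 2) by norm_num, mul_pow, Nat.add_sub_cancel]
    ring
  rw [Ptilde, if_neg (by omega), if_pos (by omega), show N - (s + m) + s = N - m by omega,
    show s + m - s = m by omega,
    Nat.choose_symm_of_eq_add (by omega : m - 1 = s - 1 + (m - s)), ← hw]
  ring

theorem sum_Icc_sum_Icc_div_two_eq_sum_range {M : Type*} [AddCommMonoid M] (N : ℕ)
    (F : ℕ → ℕ → M) (hF : ∀ s t, F s t ≠ 0 → 1 ≤ s ∧ t ≤ N) :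
    ∑ t ∈ Icc 1 N, ∑ s ∈ Icc 1 (t / 2), F s t
      = ∑ m ∈ range N, ∑ s ∈ range (m + 1), F s (s + m) := by
  rw [sum_sigma', sum_sigma']
  refine sum_bij_ne_zero (fun p _ _ => ⟨p.1 - p.2, p.2⟩) ?_ ?_ ?_ ?_
  · rintro ⟨t, s⟩ h _
    simp only [mem_sigma, mem_Icc, mem_range] at h ⊢
    omega
  · rintro ⟨t, s⟩ h _ ⟨t', s'⟩ h' _ he
    simp only [mem_sigma, mem_Icc, Sigma.mk.injEq, heq_eq_eq] at h h' he ⊢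
    omega
  · rintro ⟨m, s⟩ h hne
    obtain ⟨hs, hN⟩ : 1 ≤ s ∧ s + m ≤ N := hF _ _ hne
    simp only [mem_sigma, mem_range] at h
    refine ⟨⟨s + m, s⟩, ?_, hne, ?_⟩
    · simp only [mem_sigma, mem_Icc]
      omega
    · simp only [Sigma.mk.injEq, heq_eq_eq, and_true]
      omega
  · rintro ⟨t, s⟩ h _
    simp only [mem_sigma, mem_Icc] at h
    rw [show s + (t - s) = t by omega]

theorem sum_mul_Ptilde_eq_sum_range (N : ℕ) (g : ℕ → ℕ → ℝ) (hg : g 0 0 = 0) :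
    ∑ t ∈ Icc 1 N, ∑ s ∈ Icc 1 (t / 2), g s t * Ptilde N s t
      = ∑ m ∈ range N, ∑ s ∈ range (m + 1), g s (s + m) * Ptilde N s (s + m) := by
  refine sum_Icc_sum_Icc_div_two_eq_sum_range N _ fun s t h => ⟨?_, ?_⟩
  · by_contra! hs
    obtain rfl : s = 0 := by omega
    rcases eq_or_ne t 0 with rfl | ht
    · simp [hg] at h
    · simp [Ptilde_zero_left ht] at h
  · by_contra! hN
    simp [Ptilde_eq_zero_of_lt hN] at h

theorem sum_range_descFactorial_mul_Ptilde_add {N r m : ℕ} (hr : r ≤ m) (hmN : m < N) :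
    ∑ s ∈ range (m + 1), (s.descFactorial r : ℝ) * Ptilde N s (s + m)
      = (N - m).descFactorial r * (N - 1 - r).choose (m - r)
          * ((1 / 3 : ℝ) ^ m * (2 / 3) ^ (N - 1 - m)) := by
  have hv := Nat.sum_range_descFactorial_mul_choose_mul_choose hr (N - m) (m - 1)
  have hc : (N - m).descFactorial r * (N - m - r + (m - 1)).choose (m - r)
      = (N - m).descFactorial r * (N - 1 - r).choose (m - r) := by
    rcases lt_or_ge (N - m) r with h | h
    · simp [Nat.descFactorial_eq_zero_iff_lt.2 h]
    rcases Nat.eq_zero_or_pos m with rfl | hm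
    · simp
    · rw [show N - m - r + (m - 1) = N - 1 - r by omega]
  calc ∑ s ∈ range (m + 1), (s.descFactorial r : ℝ) * Ptilde N s (s + m)
      = ∑ s ∈ range (m + 1),
          ((s.descFactorial r * (N - m).choose s * (m - 1).choose (m - s) : ℕ) : ℝ)
          * ((1 / 3 : ℝ) ^ m * (2 / 3) ^ (N - 1 - m)) :=
        sum_congr rfl fun s hs => by
          rw [Ptilde_add (mem_range_succ_iff.1 hs)]
          push_cast
          ring
    _ = _ := by
      rw [← sum_mul, ← Nat.cast_sum, hv, hc]
      push_cast
      ring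

theorem sum_mul_Ptilde_eq_binomial (n : ℕ) (φ : ℝ → ℝ) (hφ : φ 0 = 0) :
    ∑ t ∈ Icc 1 (n + 1), ∑ s ∈ Icc 1 (t / 2), φ ((t : ℝ) - s) * Ptilde (n + 1) s t
      = ∑ m ∈ range (n + 1), φ m * (n.choose m * ((1 / 3 : ℝ) ^ m * (2 / 3) ^ (n - m))) := by
  rw [sum_mul_Ptilde_eq_sum_range _ (fun s t => φ ((t : ℝ) - s)) (by simpa using hφ)]
  refine sum_congr rfl fun m hm => ?_
  have h := sum_range_descFactorial_mul_Ptilde_add (N := n + 1) (Nat.zero_le m) (mem_range.1 hm)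
  simp only [Nat.descFactorial_zero, Nat.cast_one, one_mul, Nat.sub_zero, Nat.add_sub_cancel] at h
  simp only [Nat.cast_add, add_sub_cancel_left, ← mul_sum, h]

theorem lengthMean_succ (n : ℕ) : lengthMean (n + 1) = n / 3 := by
  have h := Nat.sum_range_descFactorial_mul_choose_mul_pow n 1 (1 / 3 : ℝ) (2 / 3)
  simp only [Nat.descFactorial_one, mul_assoc] at h
  rw [lengthMean, sum_mul_Ptilde_eq_binomial n (fun x => x) rfl, h]
  norm_num
  ring

theorem lengthSecondFactorial_succ (n : ℕ) :
    lengthSecondFactorial (n + 1) = n * (n - 1) / 9 := by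
  have h := Nat.sum_range_descFactorial_mul_choose_mul_pow n 2 (1 / 3 : ℝ) (2 / 3)
  simp only [Nat.cast_descFactorial_two, mul_assoc] at h
  rw [lengthSecondFactorial, sum_mul_Ptilde_eq_binomial n (fun x => x * (x - 1)) (by simp)]
  simp only [mul_assoc, h]
  norm_num
  ring

theorem dimerSecondFactorial_add_three_eq_sum (n : ℕ) :
    dimerSecondFactorial (n + 3) = ∑ i ∈ range (n + 1),
      ((n + 1 - i).descFactorial 2 * n.choose i : ℝ)
        * ((1 / 3 : ℝ) ^ (i + 2) * (2 / 3) ^ (n - i)) := by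
  rw [dimerSecondFactorial,
    sum_mul_Ptilde_eq_sum_range _ (fun s _ => (s : ℝ) * (s - 1)) (by simp),
    sum_range_succ', sum_range_succ']
  have hsmall :
      ∀ m < 2, ∑ s ∈ range (m + 1), (s : ℝ) * (s - 1) * Ptilde (n + 3) s (s + m) = 0 := by
    intro m hm
    interval_cases m <;> simp [sum_range_succ]
  rw [hsmall 1 one_lt_two, hsmall 0 two_pos, add_zero, add_zero]
  refine sum_congr rfl fun i hi => ?_
  have h := sum_range_descFactorial_mul_Ptilde_add (N := n + 3) (r := 2) (m := i + 2) (by omega)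
    (by have := mem_range.1 hi; omega)
  simp only [Nat.cast_descFactorial_two] at h
  rw [h, show n + 3 - (i + 2) = n + 1 - i by omega, show n + 3 - 1 - 2 = n by omega,
    show n + 3 - 1 - (i + 2) = n - i by omega, Nat.add_sub_cancel, Nat.cast_descFactorial_two]

theorem dimerSecondFactorial_add_three (n : ℕ) :
    dimerSecondFactorial (n + 3) = 4 * n * (n + 2) / 81 := by
  -- Reflecting `j ↦ n - j` turns the factor into `(j+1)j = j(j-1) + 2j`: two factorial moments
  -- of Binomial(n, 2/3).
  rw [dimerSecondFactorial_add_three_eq_sum, ← sum_range_reflect]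
  have hmoment := fun r => Nat.sum_range_descFactorial_mul_choose_mul_pow n r (2 / 3 : ℝ) (1 / 3)
  calc ∑ j ∈ range (n + 1),
        ((n + 1 - (n + 1 - 1 - j)).descFactorial 2 * n.choose (n + 1 - 1 - j) : ℝ)
        * ((1 / 3 : ℝ) ^ (n + 1 - 1 - j + 2) * (2 / 3) ^ (n - (n + 1 - 1 - j)))
      = ∑ j ∈ range (n + 1), (1 / 9 : ℝ) * ((j.descFactorial 2 * n.choose j : ℝ)
          * ((2 / 3 : ℝ) ^ j * (1 / 3) ^ (n - j))
          + 2 * ((j.descFactorial 1 * n.choose j : ℝ)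
            * ((2 / 3 : ℝ) ^ j * (1 / 3) ^ (n - j)))) :=
        sum_congr rfl fun j hj => by
          have hjn := mem_range_succ_iff.1 hj
          rw [show n + 1 - 1 - j = n - j by omega, show n + 1 - (n - j) = j + 1 by omega,
            show n - (n - j) = j by omega, Nat.choose_symm hjn, pow_add, Nat.cast_descFactorial_two,
            Nat.cast_descFactorial_two, Nat.descFactorial_one]
          push_cast
          ring
    _ = 4 * n * (n + 2) / 81 := by
      rw [← mul_sum, sum_add_distrib, ← mul_sum, hmoment, hmoment, Nat.cast_descFactorial_two,
        Nat.descFactorial_one]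
      norm_num
      ring

/-- recursive asymptotic relation for the second factorial moment
of the number of dimers. -/
theorem dimer_second_factorial_recursion :
    Filter.Tendsto
      (fun N : ℕ =>
        dimerSecondFactorial N
          - ((N : ℝ) * ((N : ℝ) - 1) / 9
              - 2 * ((N : ℝ) - 1)
                  * (lengthMean N - 4 / 3 * lengthMean (N - 1) + 4 / 9 * lengthMean (N - 2))
              + lengthSecondFactorial N - 4 / 3 * lengthSecondFactorial (N - 1)
              + 4 / 9 * lengthSecondFactorial (N - 2)))
      Filter.atTop (nhds 0) := by
  refine tendsto_const_nhds.congr' ?_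
  filter_upwards [Filter.eventually_ge_atTop 3] with N hN
  obtain ⟨n, rfl⟩ := Nat.exists_eq_add_of_le' hN
  rw [dimerSecondFactorial_add_three, show n + 3 - 1 = (n + 1) + 1 by omega,
    show n + 3 - 2 = n + 1 by omega, show n + 3 = (n + 2) + 1 from rfl]
  simp only [lengthMean_succ, lengthSecondFactorial_succ]
  push_cast
  ring
end
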